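/- Let p, q, r be probability densities with r in the same cluster as the true density p, meaning E_q[p(X)/r(X)] ≤ 1 − η for some η ∈ (0,1), where E_q denotes expectation under density q. Then ΔD := D_KL(p‖q) − D_KL(p‖r) satisfies ΔD ≥ η/ln 2 > 0. -/
import Mathlib


open MeasureTheory

/-- If `E_q[p/r] ≤ 1 − η` for some `η ∈ (0,1)` (the clustering condition), then
`ΔD = D_KL(p‖q) − D_KL(p‖r)` (in bits) satisfies `ΔD ≥ η/ln 2 > 0`. -/
theorem KL_gap_pos_of_cluster
    {α : Type*} [MeasurableSpace α] (μ : Measure α) (p q r : α → ℝ)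
    (hp_pos : ∀ x, 0 < p x) (hq_pos : ∀ x, 0 < q x) (hr_pos : ∀ x, 0 < r x)
    (hp_dens : ∫ x, p x ∂μ = 1) (hq_dens : ∫ x, q x ∂μ = 1)
    (hr_dens : ∫ x, r x ∂μ = 1)
    (h1 : Integrable (fun x => p x * Real.logb 2 (p x / q x)) μ)
    (h2 : Integrable (fun x => p x * Real.logb 2 (p x / r x)) μ)
    (h3 : Integrable (fun x => q x * (p x / r x)) μ)
    (η : ℝ) (hη0 : 0 < η) (hη1 : η < 1)
    (hcluster : (∫ x, q x * (p x / r x) ∂μ) ≤ 1 - η) :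
    η / Real.log 2 ≤
        (∫ x, p x * Real.logb 2 (p x / q x) ∂μ) -
          (∫ x, p x * Real.logb 2 (p x / r x) ∂μ) ∧
      0 < η / Real.log 2 := by
  have hlog2 : (0:ℝ) < Real.log 2 := Real.log_pos one_lt_two
  refine ⟨?_, by positivity⟩
  have hp_int : Integrable p μ := by
    by_contra h
    rw [integral_undef h] at hp_dens
    norm_num at hp_dens
  set g : α → ℝ := fun x => p x * Real.log (q x / r x) with hg
  have hident : ∀ x, p x * Real.logb 2 (p x / q x) - p x * Real.logb 2 (p x / r x)
      = -g x / Real.log 2 := by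
    intro x
    have hqx := (hq_pos x).ne'
    have hrx := (hr_pos x).ne'
    have hpx := (hp_pos x).ne'
    simp only [hg, Real.logb, Real.log_div hpx hqx, Real.log_div hpx hrx,
      Real.log_div hqx hrx]
    field_simp
    ring
  have hg_int : Integrable g μ := by
    have h := (h1.sub h2).const_mul (-Real.log 2)
    apply h.congr
    filter_upwards with x
    simp only [Pi.sub_apply]
    rw [hident x]
    field_simp
  have hmono : ∫ x, g x ∂μ ≤ (∫ x, q x * (p x / r x) ∂μ) - 1 := by
    have hle : ∫ x, g x ∂μ ≤ ∫ x, (q x * (p x / r x) - p x) ∂μ := by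
      apply integral_mono hg_int (h3.sub hp_int)
      intro x
      have ht : 0 < q x / r x := div_pos (hq_pos x) (hr_pos x)
      have hlog := Real.log_le_sub_one_of_pos ht
      have h' := mul_le_mul_of_nonneg_left hlog (hp_pos x).le
      calc g x = p x * Real.log (q x / r x) := rfl
        _ ≤ p x * (q x / r x - 1) := h'
        _ = q x * (p x / r x) - p x := by field_simp
    rwa [integral_sub h3 hp_int, hp_dens] at hle
  have hgle : ∫ x, g x ∂μ ≤ -η := by linarith
  rw [← integral_sub h1 h2]
  have heq : ∫ x, (p x * Real.logb 2 (p x / q x) - p x * Real.logb 2 (p x / r x)) ∂μ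
      = -(∫ x, g x ∂μ) / Real.log 2 := by
    simp_rw [hident]
    rw [integral_div, integral_neg]
  rw [heq]
  gcongr
  linarith
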